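/- Suppose (a*, b*) ∈ (0,∞) × (0,∞) is a joint critical point of J, i.e. ∂J/∂a(a*,b*) = 0 and ∂J/∂b(a*,b*) = 0. Then a* = c·γ'(b*)/(k·q·μ_α·θ'(b*)) and J(a*,b*) = k·a* = c·γ'(b*)/(q·μ_α·θ'(b*)). -/

import Mathlib

/-!
Both partial derivatives of `J = N / D` are quotient-rule expressions, so at a critical point
`∂N = J · ∂D` in each variable. In `a` one has `∂ₐN = k a · ∂ₐD` (both carry the factor
`λ μ_α e^{-μ_α a}`), which forces `J = k a`. In `b` one has `∂_b N = c γ'` and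
`∂_b D = q μ_α θ'`, so `c γ' = k a q μ_α θ'`, and `θ' > 0` lets one solve for `a`.
-/

open Real

theorem deriv_div_eq_zero_iff {𝕜 : Type*} [NontriviallyNormedField 𝕜]
    {f g : 𝕜 → 𝕜} {f' g' x : 𝕜} (hf : HasDerivAt f f' x) (hg : HasDerivAt g g' x)
    (hx : g x ≠ 0) :
    deriv (fun y => f y / g y) x = 0 ↔ f' = f x / g x * g' := by
  rw [show (fun y => f y / g y) = f / g from rfl, (hf.div hg hx).deriv, div_eq_zero_iff,
    or_iff_left (pow_ne_zero 2 hx), sub_eq_zero, div_mul_eq_mul_div, eq_div_iff hx]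

theorem hasDerivAt_one_sub_exp_mul_div {s : ℝ} (hs : s ≠ 0) (a : ℝ) :
    HasDerivAt (fun a => (1 - exp (-s * a) * (s * a + 1)) / s) (s * a * exp (-s * a)) a := by
  have hexp : HasDerivAt (fun a => exp (-s * a)) (exp (-s * a) * -s) a := by
    simpa using ((hasDerivAt_id a).const_mul (-s)).exp
  have hlin : HasDerivAt (fun a => s * a + 1) s a := by
    simpa using ((hasDerivAt_id a).const_mul s).add_const 1
  refine (((hexp.mul hlin).const_sub 1).div_const s).congr_deriv ?_
  field_simp
  ring

theorem div_eq_mul_of_deriv_eq_zero {s lam k N₀ D₀ a : ℝ} (hs : s ≠ 0) (hlam : lam ≠ 0)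
    (hD : D₀ + lam * exp (-s * a) ≠ 0)
    (h : deriv (fun a => (N₀ - lam * k * ((1 - exp (-s * a) * (s * a + 1)) / s)) /
      (D₀ + lam * exp (-s * a))) a = 0) :
    (N₀ - lam * k * ((1 - exp (-s * a) * (s * a + 1)) / s)) / (D₀ + lam * exp (-s * a)) = k * a := by
  have hN := ((hasDerivAt_one_sub_exp_mul_div hs a).const_mul (lam * k)).const_sub N₀
  have hD' := ((hasDerivAt_id a).const_mul (-s)).exp.const_mul lam |>.const_add D₀
  simp only [id, mul_one] at hD'
  have h := (deriv_div_eq_zero_iff hN hD' hD).1 h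
  have : lam * s * exp (-s * a) *
      ((N₀ - lam * k * ((1 - exp (-s * a) * (s * a + 1)) / s)) / (D₀ + lam * exp (-s * a)) - k * a)
      = 0 := by
    linear_combination h
  simpa [hlam, hs, sub_eq_zero] using this

section TwoExponentials

variable {Φ ρ : ℝ} (hΦ : 0 < Φ) (hρ : ρ < 0)
include hΦ hρ

theorem mul_exp_sub_mul_exp_pos (b : ℝ) : 0 < Φ * exp (Φ * b) - ρ * exp (ρ * b) := by
  nlinarith [mul_pos hΦ (exp_pos (Φ * b)), mul_pos (neg_pos.2 hρ) (exp_pos (ρ * b))]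

theorem hasDerivAt_exp_sub_exp_div (b : ℝ) :
    HasDerivAt (fun b => (exp (Φ * b) - exp (ρ * b)) / (Φ * exp (Φ * b) - ρ * exp (ρ * b)))
      ((Φ - ρ) ^ 2 * exp (Φ * b) * exp (ρ * b) / (Φ * exp (Φ * b) - ρ * exp (ρ * b)) ^ 2) b := by
  have hexp (r : ℝ) : HasDerivAt (fun b => exp (r * b)) (exp (r * b) * r) b := by
    simpa using ((hasDerivAt_id b).const_mul r).exp
  refine (((hexp Φ).sub (hexp ρ)).div (((hexp Φ).const_mul Φ).sub ((hexp ρ).const_mul ρ))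
    (mul_exp_sub_mul_exp_pos hΦ hρ b).ne').congr_deriv ?_
  simp only [Pi.sub_apply]
  ring

theorem exp_sub_exp_div_nonneg {b : ℝ} (hb : 0 ≤ b) :
    0 ≤ (exp (Φ * b) - exp (ρ * b)) / (Φ * exp (Φ * b) - ρ * exp (ρ * b)) := by
  refine div_nonneg ?_ (mul_exp_sub_mul_exp_pos hΦ hρ b).le
  rw [sub_nonneg, exp_le_exp]
  nlinarith

end TwoExponentials

theorem stmt16_general (c α lam q μ k : ℝ)
    (hα0 : 0 < α)
    (hlam : 0 < lam) (hq : 0 < q) (hμ : 0 < μ) (hk : 1 ≤ k)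
    (Φ ρ : ℝ)
    (hΦpos : 0 < Φ) (hρneg : ρ < 0)
    (γ θf m : ℝ → ℝ) (D J : ℝ → ℝ → ℝ)
    (hγ : ∀ b, γ b = (Φ - ρ)/(Φ*Real.exp (Φ*b) - ρ*Real.exp (ρ*b)))
    (hθf : ∀ b, θf b = (Real.exp (Φ*b) - Real.exp (ρ*b))/(Φ*Real.exp (Φ*b) - ρ*Real.exp (ρ*b)))
    (hm : ∀ a, m a = (1 - Real.exp (-(μ/α)*a)*((μ/α)*a + 1))/(μ/α))
    (hD : ∀ a b, D a b = q + (μ/α)*q*θf b + lam*Real.exp (-(μ/α)*a))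
    (hJ : ∀ a b, J a b = (c*γ b - lam*k*m a)/(D a b)) :
    ∀ astar bstar : ℝ, 0 < astar → 0 < bstar →
      deriv (fun a => J a bstar) astar = 0 →
      deriv (fun b => J astar b) bstar = 0 →
      astar = c * deriv γ bstar / (k*q*(μ/α)*deriv θf bstar) ∧
      J astar bstar = k * astar ∧
      J astar bstar = c * deriv γ bstar / (q*(μ/α)*deriv θf bstar) := by
  intro a b _ hb hda hdb
  have hs : 0 < μ / α := div_pos hμ hα0
  generalize μ / α = s at hs hm hD ⊢
  have hθ' := (funext hθf : θf = _) ▸ hasDerivAt_exp_sub_exp_div hΦpos hρneg b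
  have hθ'_pos : 0 < deriv θf b := by
    rw [hθ'.deriv]
    have := mul_exp_sub_mul_exp_pos hΦpos hρneg b
    have : Φ - ρ ≠ 0 := by linarith
    positivity
  have hD_pos : 0 < D a b := by
    have : 0 ≤ θf b := hθf b ▸ exp_sub_exp_div_nonneg hΦpos hρneg hb.le
    rw [hD]
    positivity
  have hJa : J a b = k * a := by
    rw [hD] at hD_pos
    simp only [hJ, hm, hD] at hda ⊢
    exact div_eq_mul_of_deriv_eq_zero hs.ne' hlam.ne' hD_pos.ne' hda
  have hb_eq : c * deriv γ b = k * a * (s * q * deriv θf b) := by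
    have hγ' : DifferentiableAt ℝ γ b := by
      rw [funext hγ]
      exact (differentiableAt_const _).div (by fun_prop) (mul_exp_sub_mul_exp_pos hΦpos hρneg b).ne'
    have hNb : HasDerivAt (fun b => c * γ b - lam * k * m a) (c * deriv γ b) b := by
      simpa using (hγ'.hasDerivAt.const_mul c).sub_const (lam * k * m a)
    have hDb : HasDerivAt (fun b => D a b) (s * q * deriv θf b) b := by
      simpa [hD] using ((hθ'.differentiableAt.hasDerivAt.const_mul (s * q)).const_add q).add_const
        (lam * exp (-s * a))
    simp only [hJ] at hdb
    rw [(deriv_div_eq_zero_iff hNb hDb hD_pos.ne').1 hdb, ← hJ, hJa]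
  have hk0 : k ≠ 0 := by linarith
  refine ⟨?_, hJa, ?_⟩
  · rw [hb_eq]; field_simp
  · rw [hJa, hb_eq]; field_simp

theorem stmt16 (c α lam q μ k : ℝ)
    (hc : 0 < c) (hα0 : 0 < α) (hα1 : α ≤ 1)
    (hlam : 0 < lam) (hq : 0 < q) (hμ : 0 < μ) (hk : 1 ≤ k)
    (Δ Φ ρ : ℝ)
    (hΔ : Δ = (c*μ - α*lam - α*q)^2 + 4*α*c*μ*q)
    (hΦ : Φ = (-(c*μ - α*lam - α*q) + Real.sqrt Δ) / (2*α*c))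
    (hρ : ρ = (-(c*μ - α*lam - α*q) - Real.sqrt Δ) / (2*α*c))
    (hΦpos : 0 < Φ) (hρneg : ρ < 0)
    (γ θf m : ℝ → ℝ) (D J ψ : ℝ → ℝ → ℝ)
    (hγ : ∀ b, γ b = (Φ - ρ)/(Φ*Real.exp (Φ*b) - ρ*Real.exp (ρ*b)))
    (hθf : ∀ b, θf b = (Real.exp (Φ*b) - Real.exp (ρ*b))/(Φ*Real.exp (Φ*b) - ρ*Real.exp (ρ*b)))
    (hm : ∀ a, m a = (1 - Real.exp (-(μ/α)*a)*((μ/α)*a + 1))/(μ/α))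
    (hD : ∀ a b, D a b = q + (μ/α)*q*θf b + lam*Real.exp (-(μ/α)*a))
    (hJ : ∀ a b, J a b = (c*γ b - lam*k*m a)/(D a b))
    (hψ : ∀ a b, ψ a b = -(a*k*(q + q*(μ/α)*θf b)) + c*γ b + lam*k*(Real.exp (-(μ/α)*a) - 1)/(μ/α)) :
    ∀ astar bstar : ℝ, 0 < astar → 0 < bstar →
      deriv (fun a => J a bstar) astar = 0 →
      deriv (fun b => J astar b) bstar = 0 →
      astar = c * deriv γ bstar / (k*q*(μ/α)*deriv θf bstar) ∧
      J astar bstar = k * astar ∧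
      J astar bstar = c * deriv γ bstar / (q*(μ/α)*deriv θf bstar) :=
  stmt16_general c α lam q μ k hα0 hlam hq hμ hk Φ ρ hΦpos hρneg γ θf m D J hγ hθf hm hD hJ
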